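/- arXiv:1304.7617 — 6 statements merged into one kernel-verified Lean document; each statement's English description precedes it below -/
import Mathlib

section
/- The product ★ on S^c is associative: for all Φ, Ψ, Χ ∈ S^c, (Φ★Ψ)★Χ = Φ★(Ψ★Χ). -/
open MeasureTheory Complex

noncomputable section

/-- `e x = exp (2 π i x)`. -/
def expi (x : ℝ) : ℂ := Complex.exp (2 * Real.pi * Complex.I * x)

/-- Partial derivative in the first variable. -/
def pdX (f : ℝ → ℝ → ℂ) : ℝ → ℝ → ℂ := fun x y => deriv (fun x' => f x' y) x

/-- Partial derivative in the second variable. -/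
def pdY (f : ℝ → ℝ → ℂ) : ℝ → ℝ → ℂ := fun x y => deriv (fun y' => f x y') y

/-- The space `S^c`: smooth functions on `ℝ × 𝕋 × ℤ` (a function on the torus `𝕋`
is identified with a `1`-periodic function on `ℝ`) satisfying the quasi-periodicity
relation `Φ(x+k,y,p) = e(ckpy) Φ(x,y,p)` for `k ∈ ℤ`, together with the
Schwartz-type bounds: for every polynomial `P` on `ℤ`, all partial derivatives
`X̃ = ∂^{m+n}/∂x^m ∂y^n` and every compact `K ⊆ ℝ × 𝕋`, the function
`P(p)(X̃Φ)(x,y,p)` is bounded on `K × ℤ`. -/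
def IsSc (c : ℕ) (Φ : ℝ → ℝ → ℤ → ℂ) : Prop :=
  (∀ p : ℤ, ContDiff ℝ (⊤ : ℕ∞) (fun xy : ℝ × ℝ => Φ xy.1 xy.2 p)) ∧
  (∀ (x y : ℝ) (p : ℤ), Φ x (y + 1) p = Φ x y p) ∧
  (∀ (k : ℤ) (x y : ℝ) (p : ℤ),
    Φ (x + k) y p = expi ((c : ℝ) * (k : ℝ) * (p : ℝ) * y) * Φ x y p) ∧
  (∀ (P : Polynomial ℤ) (m n : ℕ) (K : Set (ℝ × ℝ)), IsCompact K →
    ∃ C : ℝ, ∀ (x y : ℝ) (p : ℤ), (x, y) ∈ K →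
      ‖((P.eval p : ℤ) : ℂ) * pdX^[m] (pdY^[n] (fun x' y' => Φ x' y' p)) x y‖ ≤ C)

/-- The product `★` of the quantum Heisenberg manifold. -/
def starProd (hbar μ ν : ℝ) (Φ Ψ : ℝ → ℝ → ℤ → ℂ) : ℝ → ℝ → ℤ → ℂ :=
  fun x y p => ∑' q : ℤ,
    Φ (x - hbar * ((q : ℝ) - (p : ℝ)) * μ) (y - hbar * ((q : ℝ) - (p : ℝ)) * ν) q *
      Ψ (x - hbar * (q : ℝ) * μ) (y - hbar * (q : ℝ) * ν) (p - q)

/-- The involution `Φ*(x,y,p) = conj (Φ(x,y,-p))`. -/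
def invol (Φ : ℝ → ℝ → ℤ → ℂ) : ℝ → ℝ → ℤ → ℂ :=
  fun x y p => starRingEnd ℂ (Φ x y (-p))

/-- The group multiplication on `G = ℝ³`: `(r,s,t)(r',s',t') = (r+r', s+s', t+t'+csr')`. -/
def heisMul (c : ℕ) (g h : ℝ × ℝ × ℝ) : ℝ × ℝ × ℝ :=
  (g.1 + h.1, g.2.1 + h.2.1, g.2.2 + h.2.2 + (c : ℝ) * g.2.1 * h.1)

/-- The action of `G = ℝ³` on `S^c`. -/
def Lact (c : ℕ) (g : ℝ × ℝ × ℝ) (Φ : ℝ → ℝ → ℤ → ℂ) : ℝ → ℝ → ℤ → ℂ :=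
  fun x y p =>
    expi ((p : ℝ) * (g.2.2 + (c : ℝ) * g.2.1 * (x - g.1))) * Φ (x - g.1) (y - g.2.1) p

/-- The trace `τ(Φ) = ∫₀¹ ∫_𝕋 Φ(x,y,0) dy dx`. -/
def tauQHM (Φ : ℝ → ℝ → ℤ → ℂ) : ℂ := ∫ x in (0:ℝ)..1, ∫ y in (0:ℝ)..1, Φ x y 0

/-- The derivation `d₁(Φ) = -∂Φ/∂x`. -/
def d1 (Φ : ℝ → ℝ → ℤ → ℂ) : ℝ → ℝ → ℤ → ℂ :=
  fun x y p => - deriv (fun x' => Φ x' y p) x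

/-- The derivation `d₂(Φ)(x,y,p) = 2πicpx·Φ(x,y,p) - ∂Φ/∂y(x,y,p)`. -/
def d2 (c : ℕ) (Φ : ℝ → ℝ → ℤ → ℂ) : ℝ → ℝ → ℤ → ℂ :=
  fun x y p => ((2 * Real.pi * (c : ℝ) * (p : ℝ) * x : ℝ) : ℂ) * Complex.I * Φ x y p -
    deriv (fun y' => Φ x y' p) y

/-- The derivation `d₃(Φ)(x,y,p) = 2πipcα·Φ(x,y,p)`. -/
def d3 (c : ℕ) (α : ℝ) (Φ : ℝ → ℝ → ℤ → ℂ) : ℝ → ℝ → ℤ → ℂ :=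
  fun x y p => ((2 * Real.pi * (p : ℝ) * (c : ℝ) * α : ℝ) : ℂ) * Complex.I * Φ x y p

/-- The measure on `ℝ × 𝕋 × ℤ`, the torus being identified with `[0,1)`:
Lebesgue measure on `ℝ`, Lebesgue measure restricted to `[0,1)`, and
counting measure on `ℤ`. -/
def μQHM : Measure (ℝ × ℝ × ℤ) :=
  (volume : Measure ℝ).prod
    (((volume : Measure ℝ).restrict (Set.Ico (0:ℝ) 1)).prod Measure.count)

/-- `RepOf hbar μ ν Φ T` says that the bounded operator `T` on `L²(ℝ × 𝕋 × ℤ)` is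
given by the formula `(π(Φ)ξ)(x,y,p) = Σ_q Φ(x-hbar(q-2p)μ, y-hbar(q-2p)ν, q) ξ(x,y,p-q)`. -/
def RepOf (hbar μ ν : ℝ) (Φ : ℝ → ℝ → ℤ → ℂ) (T : Lp ℂ 2 μQHM →L[ℂ] Lp ℂ 2 μQHM) : Prop :=
  ∀ ξ : Lp ℂ 2 μQHM,
    (T ξ : ℝ × ℝ × ℤ → ℂ) =ᵐ[μQHM]
      fun w => ∑' q : ℤ,
        Φ (w.1 - hbar * ((q : ℝ) - 2 * (w.2.2 : ℝ)) * μ)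
            (w.2.1 - hbar * ((q : ℝ) - 2 * (w.2.2 : ℝ)) * ν) q *
          (ξ : ℝ × ℝ × ℤ → ℂ) (w.1, w.2.1, w.2.2 - q)

lemma norm_expi_aux (t : ℝ) : ‖expi t‖ = 1 := by
  rw [expi, Complex.norm_exp]
  have h : (2 * (Real.pi:ℂ) * Complex.I * (t:ℂ)).re = 0 := by simp
  rw [h, Real.exp_zero]

lemma summable_base : Summable (fun n : ℤ => ((1:ℝ) + (n:ℝ)^2)⁻¹) := by
  apply Summable.of_norm_bounded_eventually (g := fun n : ℤ => 1/(n:ℝ)^2)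
    (Real.summable_one_div_int_pow.mpr one_lt_two)
  rw [Filter.eventually_cofinite]
  apply Set.Finite.subset (Set.finite_singleton (0:ℤ))
  intro n hn
  simp only [Set.mem_setOf_eq, not_le] at hn
  simp only [Set.mem_singleton_iff]
  by_contra h0
  have hn0 : (n:ℝ) ≠ 0 := Int.cast_ne_zero.mpr h0
  have h1 : ‖((1:ℝ) + (n:ℝ)^2)⁻¹‖ ≤ 1/(n:ℝ)^2 := by
    rw [Real.norm_eq_abs, _root_.abs_of_nonneg (by positivity), one_div]
    apply inv_anti₀ (by positivity)
    nlinarith [sq_nonneg (n:ℝ)]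
  exact absurd h1 (not_le.mpr hn)

lemma isSc_periodY {c : ℕ} {Φ : ℝ → ℝ → ℤ → ℂ} (h : IsSc c Φ) (k : ℤ) (x y : ℝ) (p : ℤ) :
    Φ x (y + k) p = Φ x y p := by
  obtain ⟨-, hper, -, -⟩ := h
  induction k using Int.induction_on with
  | zero => simp
  | succ k ih =>
      have h1 : y + ((k:ℤ)+1 : ℤ) = (y + (k:ℤ)) + 1 := by push_cast; ring
      rw [h1, hper, ih]
  | pred k ih =>
      have h1 : (y + ((-(k:ℤ)-1 : ℤ):ℝ)) + 1 = y + ((-(k:ℤ) : ℤ):ℝ) := by push_cast; ring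
      have h2 := hper x (y + ((-(k:ℤ)-1 : ℤ):ℝ)) p
      rw [h1] at h2
      rw [← h2, ih]

lemma isSc_bound {c : ℕ} {Φ : ℝ → ℝ → ℤ → ℂ} (h : IsSc c Φ) :
    ∃ C : ℝ, 0 ≤ C ∧ ∀ (x y : ℝ) (p : ℤ), ‖Φ x y p‖ ≤ C * ((1:ℝ) + (p:ℝ)^2)⁻¹ := by
  obtain ⟨C, hC⟩ := h.2.2.2 (1 + Polynomial.X^2) 0 0 (Set.Icc 0 1 ×ˢ Set.Icc 0 1)
    (isCompact_Icc.prod isCompact_Icc)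
  have hmem : ∀ t : ℝ, Int.fract t ∈ Set.Icc (0:ℝ) 1 :=
    fun t => ⟨Int.fract_nonneg t, (Int.fract_lt_one t).le⟩
  have key : ∀ (x y : ℝ) (p : ℤ),
      (1 + (p:ℝ)^2) * ‖Φ x y p‖ ≤ C := by
    intro x y p
    have hy : Φ x y p = Φ x (Int.fract y) p := by
      conv_lhs => rw [← Int.fract_add_floor y]
      exact isSc_periodY h ⌊y⌋ x (Int.fract y) p
    have hx : Φ x (Int.fract y) p
        = expi ((c:ℝ) * (⌊x⌋:ℝ) * (p:ℝ) * Int.fract y) * Φ (Int.fract x) (Int.fract y) p := by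
      conv_lhs => rw [← Int.fract_add_floor x]
      exact h.2.2.1 ⌊x⌋ (Int.fract x) (Int.fract y) p
    have hk := hC (Int.fract x) (Int.fract y) p (Set.mk_mem_prod (hmem x) (hmem y))
    simp only [Function.iterate_zero, id_eq, Polynomial.eval_add, Polynomial.eval_one,
      Polynomial.eval_pow, Polynomial.eval_X, norm_mul] at hk
    have hnorm : ‖((1 + p^2 : ℤ) : ℂ)‖ = 1 + (p:ℝ)^2 := by
      rw [Complex.norm_intCast]
      push_cast
      rw [_root_.abs_of_nonneg (by positivity)]
    rw [hy, hx, norm_mul, norm_expi_aux, one_mul]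
    calc (1 + (p:ℝ)^2) * ‖Φ (Int.fract x) (Int.fract y) p‖
        = ‖((1 + p^2 : ℤ) : ℂ)‖ * ‖Φ (Int.fract x) (Int.fract y) p‖ := by rw [hnorm]
      _ ≤ C := hk
  have hC0 : 0 ≤ C := by
    have := key 0 0 0
    nlinarith [norm_nonneg (Φ 0 0 0)]
  refine ⟨C, hC0, fun x y p => ?_⟩
  have hpos : (0:ℝ) < 1 + (p:ℝ)^2 := by positivity
  rw [← div_eq_mul_inv, le_div_iff₀ hpos]
  calc ‖Φ x y p‖ * (1 + (p:ℝ)^2) = (1 + (p:ℝ)^2) * ‖Φ x y p‖ := by ring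
    _ ≤ C := key x y p

/-- The product `★` on `S^c` is associative. -/
theorem starProd_assoc (c : ℕ) (hc : 0 < c) (hbar μ ν : ℝ)
    (hμν : μ ^ 2 + ν ^ 2 ≠ 0) (Φ Ψ Χ : ℝ → ℝ → ℤ → ℂ)
    (hΦ : IsSc c Φ) (hΨ : IsSc c Ψ) (hΧ : IsSc c Χ) :
    starProd hbar μ ν (starProd hbar μ ν Φ Ψ) Χ =
      starProd hbar μ ν Φ (starProd hbar μ ν Ψ Χ) := by
  obtain ⟨Ca, hCa0, hCa⟩ := isSc_bound hΦ
  obtain ⟨Cb, hCb0, hCb⟩ := isSc_bound hΨ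
  obtain ⟨Cc, hCc0, hCc⟩ := isSc_bound hΧ
  funext x y p
  set F : ℤ × ℤ → ℂ := fun qr =>
    Φ ((x - hbar * ((qr.1 : ℝ) - (p : ℝ)) * μ) - hbar * ((qr.2 : ℝ) - (qr.1 : ℝ)) * μ)
      ((y - hbar * ((qr.1 : ℝ) - (p : ℝ)) * ν) - hbar * ((qr.2 : ℝ) - (qr.1 : ℝ)) * ν) qr.2 *
    Ψ ((x - hbar * ((qr.1 : ℝ) - (p : ℝ)) * μ) - hbar * (qr.2 : ℝ) * μ)
      ((y - hbar * ((qr.1 : ℝ) - (p : ℝ)) * ν) - hbar * (qr.2 : ℝ) * ν) (qr.1 - qr.2) *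
    Χ (x - hbar * (qr.1 : ℝ) * μ) (y - hbar * (qr.1 : ℝ) * ν) (p - qr.1) with hFdef
  have hb1 : ∀ t : ℝ, ((1:ℝ) + t^2)⁻¹ ≤ 1 := by
    intro t
    rw [inv_le_one₀ (by positivity)]
    nlinarith [sq_nonneg t]
  have hFsum : Summable F := by
    apply Summable.of_norm_bounded
      (g := fun qr : ℤ × ℤ => (Ca * Cb * Cc * ((1:ℝ) + ((p - qr.1 : ℤ):ℝ)^2)⁻¹) *
        (((1:ℝ) + ((qr.2 : ℤ):ℝ)^2)⁻¹))
    · have hinj : Function.Injective (fun q : ℤ => p - q) :=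
        fun a b hab => by dsimp only at hab; omega
      have hs1 : Summable (fun q : ℤ => Ca * Cb * Cc * ((1:ℝ) + ((p - q : ℤ):ℝ)^2)⁻¹) :=
        (summable_base.comp_injective hinj).mul_left (Ca * Cb * Cc)
      exact hs1.mul_of_nonneg summable_base (fun q => by positivity) (fun r => by positivity)
    · rintro ⟨q, r⟩
      simp only [hFdef, norm_mul]
      have h1 := hCa ((x - hbar * ((q : ℝ) - (p : ℝ)) * μ) - hbar * ((r : ℝ) - (q : ℝ)) * μ)
        ((y - hbar * ((q : ℝ) - (p : ℝ)) * ν) - hbar * ((r : ℝ) - (q : ℝ)) * ν) r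
      have h2 : ‖Ψ ((x - hbar * ((q : ℝ) - (p : ℝ)) * μ) - hbar * (r : ℝ) * μ)
          ((y - hbar * ((q : ℝ) - (p : ℝ)) * ν) - hbar * (r : ℝ) * ν) (q - r)‖ ≤ Cb := by
        refine (hCb _ _ _).trans ?_
        calc Cb * ((1:ℝ) + ((q - r : ℤ):ℝ)^2)⁻¹ ≤ Cb * 1 := by
              exact mul_le_mul_of_nonneg_left (hb1 _) hCb0
          _ = Cb := mul_one Cb
      have h3 := hCc (x - hbar * (q : ℝ) * μ) (y - hbar * (q : ℝ) * ν) (p - q)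
      calc ‖Φ _ _ r‖ * ‖Ψ _ _ (q - r)‖ * ‖Χ _ _ (p - q)‖
          ≤ (Ca * ((1:ℝ) + ((r:ℤ):ℝ)^2)⁻¹) * Cb * (Cc * ((1:ℝ) + ((p - q : ℤ):ℝ)^2)⁻¹) := by
            apply mul_le_mul (mul_le_mul h1 h2 (norm_nonneg _) (by positivity)) h3
              (norm_nonneg _) (by positivity)
        _ = (Ca * Cb * Cc * ((1:ℝ) + ((p - q : ℤ):ℝ)^2)⁻¹) * (((1:ℝ) + ((r:ℤ):ℝ)^2)⁻¹) := by
            ring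
  set e : ℤ × ℤ ≃ ℤ × ℤ :=
    { toFun := fun qr => (qr.1 + qr.2, qr.1)
      invFun := fun qr => (qr.2, qr.1 - qr.2)
      left_inv := fun qr => by simp
      right_inv := fun qr => by simp } with hedef
  have hL : starProd hbar μ ν (starProd hbar μ ν Φ Ψ) Χ x y p
      = ∑' q : ℤ, ∑' r : ℤ, F (q, r) := by
    simp only [starProd]
    refine tsum_congr fun q => ?_
    rw [← tsum_mul_right]
  have hR : starProd hbar μ ν Φ (starProd hbar μ ν Ψ Χ) x y p
      = ∑' q : ℤ, ∑' r : ℤ, (F ∘ e) (q, r) := by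
    simp only [starProd]
    refine tsum_congr fun q => ?_
    rw [← tsum_mul_left]
    refine tsum_congr fun r => ?_
    show _ = F (q + r, q)
    simp only [hFdef]
    push_cast
    ring_nf
  rw [hL, hR, ← Summable.tsum_prod hFsum, ← Summable.tsum_prod (e.summable_iff.mpr hFsum : Summable (F ∘ e))]
  exact (e.tsum_eq F).symm
end
end

section
/- The map Φ ↦ Φ*, where Φ*(x,y,p) = conjugate(Φ(x,y,−p)), is an involution of the algebra (S^c, ★): for all Φ, Ψ ∈ S^c one has Φ* ∈ S^c, (Φ*)* = Φ, and (Φ★Ψ)* = Ψ*★Φ*. -/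
open MeasureTheory Complex

noncomputable section

lemma deriv_conj' (f : ℝ → ℂ) (x : ℝ) :
    deriv (fun t => starRingEnd ℂ (f t)) x = starRingEnd ℂ (deriv f x) := by
  have h : deriv (Complex.conjLIE ∘ f) x = fderiv ℝ (Complex.conjLIE ∘ f) x 1 := rfl
  have h2 : deriv f x = fderiv ℝ f x 1 := rfl
  show deriv (Complex.conjLIE ∘ f) x = _
  rw [h, h2, Complex.conjLIE.comp_fderiv]; rfl

def conj2 (f : ℝ → ℝ → ℂ) : ℝ → ℝ → ℂ := fun x y => starRingEnd ℂ (f x y)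

lemma pdX_conj (f : ℝ → ℝ → ℂ) : pdX (conj2 f) = conj2 (pdX f) := by
  funext x y; exact deriv_conj' (fun x' => f x' y) x

lemma pdY_conj (f : ℝ → ℝ → ℂ) : pdY (conj2 f) = conj2 (pdY f) := by
  funext x y; exact deriv_conj' (fun y' => f x y') y

lemma pdX_iter_conj (m : ℕ) (f : ℝ → ℝ → ℂ) : pdX^[m] (conj2 f) = conj2 (pdX^[m] f) := by
  induction m generalizing f with
  | zero => rfl
  | succ m ih => rw [Function.iterate_succ_apply, pdX_conj, ih, Function.iterate_succ_apply]

lemma pdY_iter_conj (n : ℕ) (f : ℝ → ℝ → ℂ) : pdY^[n] (conj2 f) = conj2 (pdY^[n] f) := by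
  induction n generalizing f with
  | zero => rfl
  | succ n ih => rw [Function.iterate_succ_apply, pdY_conj, ih, Function.iterate_succ_apply]

lemma conj_expi (t : ℝ) : starRingEnd ℂ (expi t) = expi (-t) := by
  rw [expi, expi, ← Complex.exp_conj]
  congr 1
  simp [Complex.ext_iff]

/-- `Φ ↦ Φ*` is an involution of `(S^c, ★)`. -/
theorem invol_is_involution (c : ℕ) (hc : 0 < c) (hbar μ ν : ℝ)
    (hμν : μ ^ 2 + ν ^ 2 ≠ 0) (Φ Ψ : ℝ → ℝ → ℤ → ℂ) (hΦ : IsSc c Φ) (hΨ : IsSc c Ψ) :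
    IsSc c (invol Φ) ∧ invol (invol Φ) = Φ ∧
      invol (starProd hbar μ ν Φ Ψ) = starProd hbar μ ν (invol Ψ) (invol Φ) := by
  obtain ⟨hsm, hper, hqp, hbd⟩ := hΦ
  refine ⟨⟨?_, ?_, ?_, ?_⟩, ?_, ?_⟩
  · intro p
    exact Complex.conjCLE.contDiff.comp (hsm (-p))
  · intro x y p; simp only [invol, hper]
  · intro k x y p
    simp only [invol, hqp k x y (-p), map_mul]
    rw [conj_expi]
    congr 2
    push_cast; ring
  · intro P m n K hK
    obtain ⟨C, hC⟩ := hbd (P.comp (-Polynomial.X)) m n K hK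
    refine ⟨C, fun x y p hxy => ?_⟩
    have h1 : (fun x' y' => invol Φ x' y' p) = conj2 (fun x' y' => Φ x' y' (-p)) := rfl
    rw [h1, pdY_iter_conj, pdX_iter_conj]
    have h2 := hC x y (-p) hxy
    rw [Polynomial.eval_comp] at h2
    simp only [Polynomial.eval_neg, Polynomial.eval_X, neg_neg] at h2
    calc ‖((P.eval p : ℤ) : ℂ) * conj2 (pdX^[m] (pdY^[n] fun x' y' => Φ x' y' (-p))) x y‖
        = ‖((P.eval p : ℤ) : ℂ)‖ * ‖pdX^[m] (pdY^[n] fun x' y' => Φ x' y' (-p)) x y‖ := by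
          rw [norm_mul, conj2]; simp
      _ ≤ C := by rw [← norm_mul]; exact h2
  · funext x y p; simp [invol]
  · funext x y p
    show starRingEnd ℂ (starProd hbar μ ν Φ Ψ x y (-p)) = _
    rw [starProd, starProd, starRingEnd_apply, tsum_star]
    rw [← (Equiv.subRight p).tsum_eq]
    apply tsum_congr
    intro q
    simp only [Equiv.subRight_apply, invol, ← starRingEnd_apply, map_mul, Int.cast_sub,
      Int.cast_neg, neg_sub, sub_sub_cancel]
    rw [mul_comm]
    congr 3 <;> push_cast <;> ring_nf
end
end

section
/- For every Φ ∈ S^c, the formula (π(Φ)ξ)(x,y,p) = Σ_{q∈ℤ} Φ(x−ħ(q−2p)μ, y−ħ(q−2p)ν, q) ξ(x,y,p−q) defines a bounded linear operator π(Φ) on the Hilbert space L²(ℝ × 𝕋 × ℤ). -/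
set_option maxHeartbeats 1000000


open MeasureTheory Complex

noncomputable section

namespace QHMaux

lemma norm_expi (x : ℝ) : ‖expi x‖ = 1 := by
  simp [expi, Complex.norm_exp]

lemma summable_aux : Summable (fun q : ℤ => ((q:ℝ)^2+1)⁻¹) := by
  have hnat : Summable (fun n : ℕ => ((n:ℝ)^2+1)⁻¹) := by
    have h1 : Summable (fun n : ℕ => (((n:ℝ)+1)^2)⁻¹) := by
      have := (summable_nat_add_iff 1).mpr
        ((Real.summable_one_div_nat_pow (p := 2)).mpr one_lt_two)
      simpa [one_div] using this
    refine Summable.of_nonneg_of_le (fun n => by positivity)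
      (fun n => ?_) (h1.mul_left 2)
    have hle : ((n:ℝ)+1)^2 ≤ 2*((n:ℝ)^2+1) := by nlinarith [sq_nonneg ((n:ℝ)-1)]
    have h2 : (2*((n:ℝ)^2+1))⁻¹ ≤ (((n:ℝ)+1)^2)⁻¹ := by
      apply inv_anti₀ (by positivity) hle
    calc ((n:ℝ)^2+1)⁻¹ = 2 * (2*((n:ℝ)^2+1))⁻¹ := by
          rw [mul_inv, ← mul_assoc, mul_inv_cancel₀ two_ne_zero, one_mul]
      _ ≤ 2 * (((n:ℝ)+1)^2)⁻¹ := mul_le_mul_of_nonneg_left h2 (by norm_num)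
  exact Summable.of_nat_of_neg (by simpa using hnat) (by simpa using hnat)

lemma global_bound {c : ℕ} {Φ : ℝ → ℝ → ℤ → ℂ} (hΦ : IsSc c Φ) :
    ∃ C : ℤ → ℝ, (∀ q, 0 ≤ C q) ∧ Summable C ∧ ∀ x y q, ‖Φ x y q‖ ≤ C q := by
  obtain ⟨C₀, hC₀⟩ := hΦ.2.2.2 (Polynomial.X^2 + 1) 0 0
    (Set.Icc (0:ℝ) 1 ×ˢ Set.Icc (0:ℝ) 1) (isCompact_Icc.prod isCompact_Icc)
  simp only [Function.iterate_zero, id_eq, Polynomial.eval_add, Polynomial.eval_pow,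
    Polynomial.eval_X, Polynomial.eval_one] at hC₀
  have key : ∀ x y (q : ℤ), ((q:ℝ)^2+1) * ‖Φ x y q‖ ≤ C₀ := by
    intro x y q
    have hyper : ‖Φ x y q‖ = ‖Φ (Int.fract x) (Int.fract y) q‖ := by
      have hy : Φ x (Int.fract y) q = Φ x y q := by
        have hp : Function.Periodic (fun y' => Φ x y' q) 1 := fun y' => hΦ.2.1 x y' q
        have h1 : Int.fract y = y - (⌊y⌋:ℝ) * 1 := by rw [mul_one, Int.fract]
        rw [h1]; exact hp.sub_int_mul_eq ⌊y⌋
      have hx : Φ (Int.fract x + (⌊x⌋ : ℤ)) (Int.fract y) q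
          = expi ((c:ℝ) * (⌊x⌋:ℝ) * (q:ℝ) * Int.fract y) * Φ (Int.fract x) (Int.fract y) q :=
        hΦ.2.2.1 ⌊x⌋ (Int.fract x) (Int.fract y) q
      have hx2 : ‖Φ x (Int.fract y) q‖ = ‖Φ (Int.fract x) (Int.fract y) q‖ := by
        conv_lhs => rw [show x = Int.fract x + ((⌊x⌋:ℤ):ℝ) by
          rw [Int.fract]; push_cast; ring]
        rw [hx, norm_mul, norm_expi, one_mul]
      rw [← hy, hx2]
    have hmem : (Int.fract x, Int.fract y) ∈ Set.Icc (0:ℝ) 1 ×ˢ Set.Icc (0:ℝ) 1 :=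
      ⟨⟨Int.fract_nonneg x, (Int.fract_lt_one x).le⟩, ⟨Int.fract_nonneg y, (Int.fract_lt_one y).le⟩⟩
    have := hC₀ (Int.fract x) (Int.fract y) q hmem
    rw [norm_mul] at this
    have hnorm : ‖((q^2+1 : ℤ) : ℂ)‖ = (q:ℝ)^2+1 := by
      have hcast : ((q^2+1 : ℤ) : ℂ) = ((((q:ℝ)^2+1) : ℝ) : ℂ) := by push_cast; ring
      rw [hcast, Complex.norm_real, Real.norm_eq_abs, _root_.abs_of_nonneg (by positivity)]
    rw [hyper, ← hnorm]
    exact this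
  refine ⟨fun q => C₀ / ((q:ℝ)^2+1), fun q => ?_, ?_, fun x y q => ?_⟩
  · have h0 := key 0 0 q
    have : (0:ℝ) ≤ C₀ := le_trans (by positivity) h0
    positivity
  · simpa [div_eq_mul_inv] using summable_aux.mul_left C₀
  · rw [le_div_iff₀ (by positivity)]
    calc ‖Φ x y q‖ * ((q:ℝ)^2+1) = ((q:ℝ)^2+1) * ‖Φ x y q‖ := by ring
    _ ≤ C₀ := key x y q

instance : SigmaFinite (Measure.count : Measure ℤ) :=
  ⟨⟨⟨fun n => {(Denumerable.ofNat ℤ n)}, fun _ => trivial,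
    fun n => by simp [Measure.count_singleton],
    by ext x; simp⟩⟩⟩

def shiftq (q : ℤ) : ℝ × ℝ × ℤ → ℝ × ℝ × ℤ := fun w => (w.1, w.2.1, w.2.2 - q)

lemma mp_shiftq (q : ℤ) : MeasurePreserving (shiftq q) μQHM μQHM := by
  have h3 : MeasurePreserving (fun p : ℤ => p - q) Measure.count Measure.count := by
    constructor
    · exact Measurable.of_discrete
    · ext s hs
      rw [Measure.map_apply Measurable.of_discrete hs]
      have h : (fun p : ℤ => p - q) ⁻¹' s = (fun p : ℤ => p + q) '' s := by
        ext x
        constructor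
        · intro h; exact ⟨x - q, h, by ring⟩
        · rintro ⟨y, hy, rfl⟩; simpa using hy
      rw [h, Measure.count_injective_image (add_left_injective q)]
  have h := (MeasurePreserving.id (volume : Measure ℝ)).prod
    ((MeasurePreserving.id ((volume : Measure ℝ).restrict (Set.Ico (0:ℝ) 1))).prod h3)
  have heq : Prod.map id (Prod.map id (fun p : ℤ => p - q)) = shiftq q := by
    funext w; rfl
  rw [heq] at h
  exact h

def coeffQ (hbar μ ν : ℝ) (Φ : ℝ → ℝ → ℤ → ℂ) (q : ℤ) (w : ℝ × ℝ × ℤ) : ℂ :=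
  Φ (w.1 - hbar * ((q : ℝ) - 2 * (w.2.2 : ℝ)) * μ)
    (w.2.1 - hbar * ((q : ℝ) - 2 * (w.2.2 : ℝ)) * ν) q

lemma measurable_coeffQ {hbar μ ν : ℝ} {Φ : ℝ → ℝ → ℤ → ℂ}
    (hcont : ∀ p : ℤ, Continuous (fun xy : ℝ × ℝ => Φ xy.1 xy.2 p)) (q : ℤ) :
    Measurable (coeffQ hbar μ ν Φ q) := by
  have mcast : Measurable fun w : ℝ × ℝ × ℤ => ((w.2.2 : ℤ) : ℝ) :=
    (Measurable.of_discrete (f := fun p : ℤ => (p:ℝ))).comp (measurable_snd.comp measurable_snd)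
  have f1 : Measurable fun w : ℝ × ℝ × ℤ => w.1 - hbar * ((q : ℝ) - 2 * (w.2.2 : ℝ)) * μ :=
    measurable_fst.sub (((measurable_const.sub (mcast.const_mul 2)).const_mul hbar).mul_const μ)
  have f2 : Measurable fun w : ℝ × ℝ × ℤ => w.2.1 - hbar * ((q : ℝ) - 2 * (w.2.2 : ℝ)) * ν :=
    (measurable_fst.comp measurable_snd).sub
      (((measurable_const.sub (mcast.const_mul 2)).const_mul hbar).mul_const ν)
  exact (hcont q).measurable.comp (f1.prodMk f2)

section Main

open Filter ENNReal

variable {hbar μ ν : ℝ} {Φ : ℝ → ℝ → ℤ → ℂ} {C : ℤ → ℝ}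

lemma shift_lintegral {G : (ℝ×ℝ×ℤ) → ℝ≥0∞} (hG : AEMeasurable G μQHM) (q : ℤ) :
    ∫⁻ w, G (shiftq q w) ∂μQHM = ∫⁻ w, G w ∂μQHM := by
  conv_rhs => rw [← (mp_shiftq q).map_eq]
  rw [lintegral_map' (by rwa [(mp_shiftq q).map_eq]) (mp_shiftq q).measurable.aemeasurable]

lemma sq_eLpNorm (f : ℝ×ℝ×ℤ → ℂ) :
    ∫⁻ w, ((‖f w‖₊ : ℝ≥0∞)) ^ 2 ∂μQHM = eLpNorm f 2 μQHM ^ 2 := by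
  rw [eLpNorm_eq_lintegral_rpow_enorm_toReal (by norm_num) (by norm_num)]
  have h2 : ((2:ℝ≥0∞)).toReal = (2:ℝ) := by norm_num
  rw [h2, ← ENNReal.rpow_natCast _ 2, ← ENNReal.rpow_mul]
  norm_num
  rfl

lemma main_est (hcont : ∀ p : ℤ, Continuous (fun xy : ℝ × ℝ => Φ xy.1 xy.2 p))
    (hC0 : ∀ q, 0 ≤ C q) (hCsum : Summable C)
    (hCb : ∀ x y q, ‖Φ x y q‖ ≤ C q)
    {ξf : ℝ × ℝ × ℤ → ℂ} (hξ : MemLp ξf 2 μQHM) :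
    MemLp (fun w => ∑' q : ℤ, coeffQ hbar μ ν Φ q w * ξf (shiftq q w)) 2 μQHM ∧
    eLpNorm (fun w => ∑' q : ℤ, coeffQ hbar μ ν Φ q w * ξf (shiftq q w)) 2 μQHM
      ≤ ENNReal.ofReal (∑' q, C q) * eLpNorm ξf 2 μQHM ∧
    (∀ᵐ w ∂μQHM, Summable fun q : ℤ => ‖coeffQ hbar μ ν Φ q w * ξf (shiftq q w)‖) := by
  set F : ℤ → (ℝ × ℝ × ℤ) → ℂ := fun q w => coeffQ hbar μ ν Φ q w * ξf (shiftq q w) with hF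
  set g : (ℝ × ℝ × ℤ) → ℂ := fun w => ∑' q : ℤ, F q w with hg
  set B : ℝ≥0∞ := ENNReal.ofReal (∑' q, C q) * eLpNorm ξf 2 μQHM with hB
  have hξm : AEStronglyMeasurable ξf μQHM := hξ.aestronglyMeasurable
  have hξmq : ∀ q : ℤ, AEStronglyMeasurable (fun w => ξf (shiftq q w)) μQHM := fun q =>
    hξm.comp_quasiMeasurePreserving (mp_shiftq q).quasiMeasurePreserving
  have hFm : ∀ q, AEStronglyMeasurable (F q) μQHM := fun q =>
    ((measurable_coeffQ hcont q).aestronglyMeasurable).mul (hξmq q)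
  have hcoeffb : ∀ (q : ℤ) w, ‖coeffQ hbar μ ν Φ q w‖ ≤ C q := fun q w => hCb _ _ q
  have hFb : ∀ (q : ℤ) w, ‖F q w‖ ≤ C q * ‖ξf (shiftq q w)‖ := by
    intro q w
    rw [hF, norm_mul]
    exact mul_le_mul_of_nonneg_right (hcoeffb q w) (norm_nonneg _)
  -- the dominating ENNReal series
  set G : ℤ → (ℝ × ℝ × ℤ) → ℝ≥0∞ :=
    fun q w => ENNReal.ofReal (C q) * ((‖ξf (shiftq q w)‖₊ : ℝ≥0∞))^2 with hG
  have hGq : ∀ q : ℤ, AEMeasurable (fun w => ((‖ξf (shiftq q w)‖₊ : ℝ≥0∞))^2) μQHM :=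
    fun q => ((hξmq q).enorm).pow_const 2
  have hGm : ∀ q, AEMeasurable (G q) μQHM := fun q => (hGq q).const_mul _
  have htot' : ∫⁻ w, (∑' q : ℤ, G q w) ∂μQHM
      = ENNReal.ofReal (∑' q, C q) * eLpNorm ξf 2 μQHM ^ 2 := by
    rw [lintegral_tsum hGm]
    have hone : ∀ q : ℤ, ∫⁻ w, G q w ∂μQHM
        = ENNReal.ofReal (C q) * eLpNorm ξf 2 μQHM ^ 2 := by
      intro q
      rw [hG]
      rw [lintegral_const_mul'' _ (hGq q)]
      rw [shift_lintegral (G := fun w => ((‖ξf w‖₊ : ℝ≥0∞))^2) (hξm.enorm.pow_const 2) q, sq_eLpNorm]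
    simp_rw [hone]
    rw [ENNReal.tsum_mul_right, ← ENNReal.ofReal_tsum_of_nonneg hC0 hCsum]
  have hξfin : eLpNorm ξf 2 μQHM ^ 2 < ∞ := by
    have := hξ.2
    exact pow_lt_top this
  have hfin : ∀ᵐ w ∂μQHM, (∑' q : ℤ, G q w) < ∞ := by
    apply ae_lt_top' (AEMeasurable.ennreal_tsum hGm)
    rw [htot']
    exact (ENNReal.mul_lt_top ENNReal.ofReal_lt_top hξfin).ne
  -- a.e. summability
  have hsum_ae : ∀ᵐ w ∂μQHM, Summable fun q : ℤ => ‖F q w‖ := by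
    filter_upwards [hfin] with w hw
    have h1 : Summable (fun q : ℤ => (G q w).toReal) := ENNReal.summable_toReal hw.ne
    have h1' : (fun q : ℤ => (G q w).toReal)
        = fun q : ℤ => C q * ‖ξf (shiftq q w)‖^2 := by
      funext q
      rw [hG]
      rw [ENNReal.toReal_mul, ENNReal.toReal_ofReal (hC0 q)]
      rw [ENNReal.toReal_pow]
      norm_num
    rw [h1'] at h1
    apply Summable.of_nonneg_of_le (fun q => norm_nonneg _) (fun q => ?_) (hCsum.add h1)
    calc ‖F q w‖ ≤ C q * ‖ξf (shiftq q w)‖ := hFb q w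
      _ ≤ C q + C q * ‖ξf (shiftq q w)‖^2 := by
          nlinarith [hC0 q, norm_nonneg (ξf (shiftq q w)),
            sq_nonneg (‖ξf (shiftq q w)‖ - 1), mul_nonneg (hC0 q) (sq_nonneg (‖ξf (shiftq q w)‖ - 1))]
  -- per-term L² estimate
  have hterm : ∀ q : ℤ, eLpNorm (F q) 2 μQHM ≤ ENNReal.ofReal (C q) * eLpNorm ξf 2 μQHM := by
    intro q
    have h1 : eLpNorm (F q) 2 μQHM ≤ eLpNorm (fun w => C q * ‖ξf (shiftq q w)‖) 2 μQHM := by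
      apply eLpNorm_mono fun w => ?_
      rw [Real.norm_eq_abs, _root_.abs_of_nonneg (mul_nonneg (hC0 q) (norm_nonneg _))]
      exact hFb q w
    have h2 : (fun w => C q * ‖ξf (shiftq q w)‖)
        = (C q) • (fun w => ‖ξf (shiftq q w)‖) := rfl
    rw [h2, eLpNorm_const_smul] at h1
    have h3 : eLpNorm (fun w => ‖ξf (shiftq q w)‖) 2 μQHM = eLpNorm ξf 2 μQHM := by
      rw [eLpNorm_norm (fun w => ξf (shiftq q w))]
      exact eLpNorm_comp_measurePreserving hξm (mp_shiftq q)
    rw [h3] at h1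
    refine h1.trans (le_of_eq ?_)
    congr 1
    exact Real.enorm_eq_ofReal (hC0 q)
  -- partial sums
  set e : ℕ ≃ ℤ := (Denumerable.eqv ℤ).symm with he
  set S : ℕ → (ℝ × ℝ × ℤ) → ℂ := fun n => ∑ i ∈ Finset.range n, F (e i) with hS
  have hSw : ∀ n w, S n w = ∑ i ∈ Finset.range n, F (e i) w := fun n w => Finset.sum_apply _ _ _
  have hSm : ∀ n, AEStronglyMeasurable (S n) μQHM := by
    intro n
    rw [show S n = fun w => ∑ i ∈ Finset.range n, F (e i) w from funext (hSw n)]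
    exact Finset.aestronglyMeasurable_fun_sum _ (fun i _ => hFm (e i))
  have htend : ∀ᵐ w ∂μQHM, Filter.Tendsto (fun n => S n w) Filter.atTop (nhds (g w)) := by
    filter_upwards [hsum_ae] with w hw
    have hs : Summable (fun q : ℤ => F q w) := hw.of_norm
    have h := ((e.hasSum_iff).mpr hs.hasSum).tendsto_sum_nat
    have hfe : (fun n => S n w) = fun n => ∑ i ∈ Finset.range n, F (e i) w := by
      funext n; exact hSw n w
    rw [hfe]
    exact h
  have hgm : AEStronglyMeasurable g μQHM :=
    aestronglyMeasurable_of_tendsto_ae Filter.atTop hSm htend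
  have hSbound : ∀ n, ∫⁻ w, ((‖S n w‖₊ : ℝ≥0∞))^2 ∂μQHM ≤ B^2 := by
    intro n
    rw [sq_eLpNorm (S n)]
    have : eLpNorm (S n) 2 μQHM ≤ B := by
      calc eLpNorm (S n) 2 μQHM
          ≤ ∑ i ∈ Finset.range n, eLpNorm (F (e i)) 2 μQHM :=
            eLpNorm_sum_le (fun i _ => hFm (e i)) (by norm_num)
        _ ≤ ∑ i ∈ Finset.range n, ENNReal.ofReal (C (e i)) * eLpNorm ξf 2 μQHM :=
            Finset.sum_le_sum (fun i _ => hterm (e i))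
        _ = (∑ i ∈ Finset.range n, ENNReal.ofReal (C (e i))) * eLpNorm ξf 2 μQHM := by
            rw [Finset.sum_mul]
        _ ≤ (∑' i : ℕ, ENNReal.ofReal (C (e i))) * eLpNorm ξf 2 μQHM :=
            mul_le_mul_left (ENNReal.sum_le_tsum _) _
        _ = (∑' q : ℤ, ENNReal.ofReal (C q)) * eLpNorm ξf 2 μQHM := by
            congr 1
            exact e.tsum_eq (fun q : ℤ => ENNReal.ofReal (C q))
        _ = B := by rw [hB, ← ENNReal.ofReal_tsum_of_nonneg hC0 hCsum]
    exact pow_le_pow_left' this 2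
  have hgInt : ∫⁻ w, ((‖g w‖₊ : ℝ≥0∞))^2 ∂μQHM ≤ B^2 := by
    have hliminf : ∀ᵐ w ∂μQHM, ((‖g w‖₊ : ℝ≥0∞))^2
        = Filter.liminf (fun n => ((‖S n w‖₊ : ℝ≥0∞))^2) Filter.atTop := by
      filter_upwards [htend] with w hw
      have hc : Continuous (fun z : ℂ => ((‖z‖₊ : ℝ≥0∞))^2) :=
        (ENNReal.continuous_pow 2).comp (ENNReal.continuous_coe.comp continuous_nnnorm)
      exact ((hc.tendsto (g w)).comp hw).liminf_eq.symm
    calc ∫⁻ w, ((‖g w‖₊ : ℝ≥0∞))^2 ∂μQHM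
        = ∫⁻ w, Filter.liminf (fun n => ((‖S n w‖₊ : ℝ≥0∞))^2) Filter.atTop ∂μQHM :=
          lintegral_congr_ae hliminf
      _ ≤ Filter.liminf (fun n => ∫⁻ w, ((‖S n w‖₊ : ℝ≥0∞))^2 ∂μQHM) Filter.atTop :=
          lintegral_liminf_le' (fun n => ((hSm n).enorm).pow_const 2)
      _ ≤ B^2 := by
          refine (Filter.liminf_le_liminf (Filter.Eventually.of_forall hSbound)).trans_eq ?_
          exact Filter.liminf_const _
  have hgle : eLpNorm g 2 μQHM ≤ B := by
    rw [sq_eLpNorm g] at hgInt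
    by_contra h
    push_neg at h
    exact absurd hgInt (not_le.mpr (ENNReal.pow_lt_pow_left (by norm_num) h))
  have hBfin : B < ∞ := ENNReal.mul_lt_top ENNReal.ofReal_lt_top hξ.2
  exact ⟨⟨hgm, lt_of_le_of_lt hgle hBfin⟩, hgle, hsum_ae⟩

lemma tsum_congr_ae {ξ1 ξ2 : ℝ × ℝ × ℤ → ℂ} (h : ξ1 =ᵐ[μQHM] ξ2) :
    (fun w => ∑' q : ℤ, coeffQ hbar μ ν Φ q w * ξ1 (shiftq q w))
      =ᵐ[μQHM] (fun w => ∑' q : ℤ, coeffQ hbar μ ν Φ q w * ξ2 (shiftq q w)) := by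
  have hq : ∀ q : ℤ, ∀ᵐ w ∂μQHM, ξ1 (shiftq q w) = ξ2 (shiftq q w) := by
    intro q
    exact MeasureTheory.ae_eq_comp (mp_shiftq q).measurable.aemeasurable
      (by rwa [(mp_shiftq q).map_eq] : ξ1 =ᵐ[μQHM.map (shiftq q)] ξ2)
  have hall : ∀ᵐ w ∂μQHM, ∀ q : ℤ, ξ1 (shiftq q w) = ξ2 (shiftq q w) := ae_all_iff.mpr hq
  filter_upwards [hall] with w hw
  exact tsum_congr fun q => by rw [hw q]

end Main

end QHMaux

/-- For every `Φ ∈ S^c` the formula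
`(π(Φ)ξ)(x,y,p) = Σ_q Φ(x-ħ(q-2p)μ, y-ħ(q-2p)ν, q) ξ(x,y,p-q)` defines a bounded
linear operator on `L²(ℝ × 𝕋 × ℤ)`. -/
theorem exists_bounded_rep (c : ℕ) (hc : 0 < c) (hbar μ ν : ℝ)
    (hμν : μ ^ 2 + ν ^ 2 ≠ 0) (Φ : ℝ → ℝ → ℤ → ℂ) (hΦ : IsSc c Φ) :
    ∃ T : Lp ℂ 2 μQHM →L[ℂ] Lp ℂ 2 μQHM, RepOf hbar μ ν Φ T := by
  classical
  obtain ⟨C, hC0, hCsum, hCb⟩ := QHMaux.global_bound hΦ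
  have hcont : ∀ p : ℤ, Continuous (fun xy : ℝ × ℝ => Φ xy.1 xy.2 p) :=
    fun p => (hΦ.1 p).continuous
  have main := fun ξ : Lp ℂ 2 μQHM =>
    QHMaux.main_est (hbar := hbar) (μ := μ) (ν := ν) hcont hC0 hCsum hCb (Lp.memLp ξ)
  have hMnn : 0 ≤ ∑' q, C q := tsum_nonneg hC0
  let L : Lp ℂ 2 μQHM →ₗ[ℂ] Lp ℂ 2 μQHM :=
  { toFun := fun ξ => ((main ξ).1).toLp _
    map_add' := by
      intro ξ η
      rw [← MemLp.toLp_add ((main ξ).1) ((main η).1)]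
      apply MemLp.toLp_congr
      refine (QHMaux.tsum_congr_ae (Lp.coeFn_add ξ η)).trans ?_
      filter_upwards [(main ξ).2.2, (main η).2.2] with w h1 h2
      simp only [Pi.add_apply]
      calc ∑' q : ℤ, QHMaux.coeffQ hbar μ ν Φ q w *
              ((ξ : ℝ × ℝ × ℤ → ℂ) (QHMaux.shiftq q w) + (η : ℝ × ℝ × ℤ → ℂ) (QHMaux.shiftq q w))
          = ∑' q : ℤ, (QHMaux.coeffQ hbar μ ν Φ q w * (ξ : ℝ × ℝ × ℤ → ℂ) (QHMaux.shiftq q w)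
              + QHMaux.coeffQ hbar μ ν Φ q w * (η : ℝ × ℝ × ℤ → ℂ) (QHMaux.shiftq q w)) :=
            tsum_congr fun q => mul_add _ _ _
        _ = _ := Summable.tsum_add h1.of_norm h2.of_norm
    map_smul' := by
      intro a ξ
      simp only [RingHom.id_apply]
      rw [← MemLp.toLp_const_smul a ((main ξ).1)]
      apply MemLp.toLp_congr
      refine (QHMaux.tsum_congr_ae (Lp.coeFn_smul a ξ)).trans ?_
      refine Filter.Eventually.of_forall fun w => ?_
      simp only [Pi.smul_apply, smul_eq_mul]
      rw [← tsum_mul_left]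
      exact tsum_congr fun q => by ring }
  have hbound : ∀ ξ : Lp ℂ 2 μQHM, ‖L ξ‖ ≤ (∑' q, C q) * ‖ξ‖ := by
    intro ξ
    show ‖((main ξ).1).toLp _‖ ≤ _
    rw [Lp.norm_toLp]
    have h1 := (main ξ).2.1
    have h2 : (eLpNorm (fun w => ∑' q : ℤ, QHMaux.coeffQ hbar μ ν Φ q w *
          (ξ : ℝ × ℝ × ℤ → ℂ) (QHMaux.shiftq q w)) 2 μQHM).toReal
        ≤ (ENNReal.ofReal (∑' q, C q) * eLpNorm (ξ : ℝ × ℝ × ℤ → ℂ) 2 μQHM).toReal :=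
      ENNReal.toReal_mono
        (ENNReal.mul_ne_top ENNReal.ofReal_ne_top (Lp.memLp ξ).2.ne) h1
    rw [ENNReal.toReal_mul, ENNReal.toReal_ofReal hMnn] at h2
    rw [Lp.norm_def]
    exact h2
  refine ⟨LinearMap.mkContinuous L (∑' q, C q) hbound, fun ξ => ?_⟩
  exact MemLp.coeFn_toLp ((main ξ).1)
end
end

section
/- The map π is *-preserving: for every Φ ∈ S^c, π(Φ*) equals the Hilbert-space adjoint of π(Φ) on L²(ℝ × 𝕋 × ℤ), where Φ*(x,y,p) = conjugate(Φ(x,y,−p)). -/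
open MeasureTheory Complex

noncomputable section

section AuxRepStar

open scoped ComplexConjugate

instance : SFinite (Measure.count : Measure ℤ) :=
  inferInstanceAs (SFinite (Measure.sum (Measure.dirac : ℤ → Measure ℤ)))

lemma my_integral_count {f : ℤ → ℂ} (hf : Summable fun p => ‖f p‖) :
    ∫ p, f p ∂(Measure.count : Measure ℤ) = ∑' p, f p := by
  rw [integral_countable' (integrable_count_iff.mpr hf)]
  simp [Measure.count_singleton]

lemma expi_norm (r : ℝ) : ‖expi r‖ = 1 := by
  unfold expi
  rw [Complex.norm_exp]
  have : (2 * (Real.pi : ℂ) * Complex.I * (r : ℂ)).re = 0 := by simp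
  rw [this, Real.exp_zero]

lemma summable_inv_one_add_sq : Summable (fun q : ℤ => (1 + (q : ℝ) ^ 2)⁻¹) := by
  have h1 : Summable (fun q : ℤ => 1 / (q : ℝ) ^ 2) :=
    Real.summable_one_div_int_pow.mpr one_lt_two
  have h2 : Summable (fun q : ℤ => if q = 0 then (1 : ℝ) else 0) :=
    summable_of_ne_finset_zero (s := {0}) (fun q hq => if_neg (by simpa using hq))
  apply Summable.of_nonneg_of_le (fun q => by positivity) _ (h1.add h2)
  intro q
  by_cases h : q = 0
  · subst h; simp
  · have hq : ((q : ℝ)) ≠ 0 := Int.cast_ne_zero.mpr h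
    have hq2 : (0 : ℝ) < (q : ℝ) ^ 2 := by positivity
    simp only [if_neg h, add_zero, one_div]
    exact inv_anti₀ hq2 (by linarith)

lemma decay {c : ℕ} {Φ : ℝ → ℝ → ℤ → ℂ} (hΦ : IsSc c Φ) :
    ∃ C : ℝ, ∀ (x y : ℝ) (q : ℤ), ‖Φ x y q‖ ≤ C * (1 + (q : ℝ) ^ 2)⁻¹ := by
  obtain ⟨-, hper, hqp, hbd⟩ := hΦ
  have hK : IsCompact ((Set.Icc (0:ℝ) 1) ×ˢ (Set.Icc (0:ℝ) 1)) :=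
    isCompact_Icc.prod isCompact_Icc
  obtain ⟨C₀, hC₀⟩ := hbd 1 0 0 _ hK
  obtain ⟨C₂, hC₂⟩ := hbd (Polynomial.X ^ 2) 0 0 _ hK
  simp only [Function.iterate_zero, id_eq, Polynomial.eval_one, Polynomial.eval_pow,
    Polynomial.eval_X, Int.cast_one, one_mul] at hC₀ hC₂
  have hred : ∀ (x y : ℝ) (q : ℤ), ‖Φ x y q‖ = ‖Φ (Int.fract x) (Int.fract y) q‖ := by
    intro x y q
    have hy : Function.Periodic (fun t => Φ x t q) 1 := fun t => hper x t q
    have hx : ‖Φ x y q‖ = ‖Φ (Int.fract x) y q‖ := by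
      conv_lhs => rw [show x = Int.fract x + (⌊x⌋ : ℝ) from (Int.fract_add_floor x).symm]
      rw [hqp ⌊x⌋ (Int.fract x) y q, norm_mul, expi_norm, one_mul]
    have hy2 : Function.Periodic (fun t => Φ (Int.fract x) t q) 1 := fun t => hper _ t q
    have h2 := hy2.sub_int_mul_eq (x := y) ⌊y⌋
    simp only [mul_one] at h2
    rw [hx, ← h2, Int.self_sub_floor]
  have hmem : ∀ z w : ℝ, (Int.fract z, Int.fract w) ∈
      ((Set.Icc (0:ℝ) 1) ×ˢ (Set.Icc (0:ℝ) 1)) := fun z w =>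
    ⟨⟨Int.fract_nonneg z, le_of_lt (Int.fract_lt_one z)⟩,
     ⟨Int.fract_nonneg w, le_of_lt (Int.fract_lt_one w)⟩⟩
  refine ⟨C₀ + C₂, fun x y q => ?_⟩
  rw [hred x y q]
  have hpos : (0:ℝ) < 1 + (q:ℝ)^2 := by positivity
  have ha := hC₀ (Int.fract x) (Int.fract y) q (hmem x y)
  have hb := hC₂ (Int.fract x) (Int.fract y) q (hmem x y)
  rw [norm_mul] at hb
  have hnc : ‖((q ^ 2 : ℤ) : ℂ)‖ = (q : ℝ) ^ 2 := by
    rw [show ((q ^ 2 : ℤ) : ℂ) = ((q : ℂ)) ^ 2 by push_cast; ring, norm_pow,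
      Complex.norm_intCast, _root_.sq_abs]
  rw [hnc] at hb
  rw [mul_comm, ← div_eq_inv_mul, le_div_iff₀ hpos]
  nlinarith [norm_nonneg (Φ (Int.fract x) (Int.fract y) q)]

end AuxRepStar

section CoreRepStar

/-- integrand of `conj (π(Φ*)ξ) * η`. -/
def Afun (hbar a b : ℝ) (Φ : ℝ → ℝ → ℤ → ℂ) (uf vf : ℝ × ℝ × ℤ → ℂ) : ℝ × ℝ × ℤ → ℂ :=
  fun w => ∑' q : ℤ,
    Φ (w.1 - hbar * ((q : ℝ) - 2 * (w.2.2 : ℝ)) * a)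
        (w.2.1 - hbar * ((q : ℝ) - 2 * (w.2.2 : ℝ)) * b) (-q) *
      ((starRingEnd ℂ) (uf (w.1, w.2.1, w.2.2 - q)) * vf w)

/-- integrand of `conj ξ * (π(Φ)η)`. -/
def Bfun (hbar a b : ℝ) (Φ : ℝ → ℝ → ℤ → ℂ) (uf vf : ℝ × ℝ × ℤ → ℂ) : ℝ × ℝ × ℤ → ℂ :=
  fun w => ∑' q : ℤ,
    (starRingEnd ℂ) (uf w) *
      (Φ (w.1 - hbar * ((q : ℝ) - 2 * (w.2.2 : ℝ)) * a)
          (w.2.1 - hbar * ((q : ℝ) - 2 * (w.2.2 : ℝ)) * b) q * vf (w.1, w.2.1, w.2.2 - q))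

set_option maxHeartbeats 1000000 in
lemma core_rep_star (hbar a b C : ℝ) (Φ : ℝ → ℝ → ℤ → ℂ)
    (hdec : ∀ (x y : ℝ) (q : ℤ), ‖Φ x y q‖ ≤ C * (1 + (q : ℝ) ^ 2)⁻¹)
    (uf vf : ℝ × ℝ × ℤ → ℂ) (x y : ℝ)
    (hu : Summable fun p : ℤ => ‖uf (x, y, p)‖ * ‖uf (x, y, p)‖)
    (hv : Summable fun p : ℤ => ‖vf (x, y, p)‖ * ‖vf (x, y, p)‖) :
    ∫ p : ℤ, Afun hbar a b Φ uf vf (x, y, p) ∂(Measure.count : Measure ℤ)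
      = ∫ p : ℤ, Bfun hbar a b Φ uf vf (x, y, p) ∂(Measure.count : Measure ℤ) := by
  have hC : (0 : ℝ) ≤ C := le_trans (norm_nonneg (Φ 0 0 0)) (by simpa using hdec 0 0 0)
  set F : ℤ × ℤ → ℂ := fun z =>
    Φ (x - hbar * ((z.2 : ℝ) - 2 * (z.1 : ℝ)) * a)
        (y - hbar * ((z.2 : ℝ) - 2 * (z.1 : ℝ)) * b) (-z.2) *
      ((starRingEnd ℂ) (uf (x, y, z.1 - z.2)) * vf (x, y, z.1)) with hF
  set G : ℤ × ℤ → ℂ := fun z =>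
    (starRingEnd ℂ) (uf (x, y, z.1)) *
      (Φ (x - hbar * ((z.2 : ℝ) - 2 * (z.1 : ℝ)) * a)
          (y - hbar * ((z.2 : ℝ) - 2 * (z.1 : ℝ)) * b) z.2 * vf (x, y, z.1 - z.2)) with hG
  -- the reindexing involution
  have einv : Function.Involutive (fun z : ℤ × ℤ => (z.1 - z.2, -z.2)) := by
    intro z; simp
  set e : Equiv.Perm (ℤ × ℤ) := einv.toPerm _ with he
  have hGF : ∀ z : ℤ × ℤ, G (e z) = F z := by
    rintro ⟨p, q⟩
    have harg : ((-q : ℤ) : ℝ) - 2 * ((p - q : ℤ) : ℝ) = (q : ℝ) - 2 * (p : ℝ) := by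
      push_cast; ring
    have hidx : p - q - -q = p := by ring
    simp only [hF, hG, he, Function.Involutive.coe_toPerm]
    rw [harg, hidx]
    ring
  -- norm bounds and summability
  have hφ : Summable (fun q : ℤ => C * (1 + (q : ℝ) ^ 2)⁻¹) :=
    summable_inv_one_add_sq.mul_left C
  have hφ0 : ∀ q : ℤ, 0 ≤ C * (1 + (q : ℝ) ^ 2)⁻¹ := fun q => by positivity
  have h1 : Summable (fun z : ℤ × ℤ =>
      (‖uf (x, y, z.1)‖ * ‖uf (x, y, z.1)‖) * (C * (1 + (z.2 : ℝ) ^ 2)⁻¹)) :=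
    hu.mul_of_nonneg hφ (fun p => mul_nonneg (norm_nonneg _) (norm_nonneg _)) hφ0
  have h2 : Summable (fun z : ℤ × ℤ =>
      (‖vf (x, y, z.1)‖ * ‖vf (x, y, z.1)‖) * (C * (1 + (z.2 : ℝ) ^ 2)⁻¹)) :=
    hv.mul_of_nonneg hφ (fun p => mul_nonneg (norm_nonneg _) (norm_nonneg _)) hφ0
  have hinj : Function.Injective (fun z : ℤ × ℤ => (z.1 - z.2, z.2)) := by
    rintro ⟨p, q⟩ ⟨p', q'⟩ h
    simp only [Prod.mk.injEq] at h ⊢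
    omega
  have h1' : Summable (fun z : ℤ × ℤ =>
      (‖uf (x, y, z.1 - z.2)‖ * ‖uf (x, y, z.1 - z.2)‖) * (C * (1 + (z.2 : ℝ) ^ 2)⁻¹)) := by
    have h1'' := h1.comp_injective hinj
    exact h1''.congr (fun z => rfl)
  have hH : Summable (fun z : ℤ × ℤ =>
      ((‖uf (x, y, z.1 - z.2)‖ * ‖uf (x, y, z.1 - z.2)‖)
        + (‖vf (x, y, z.1)‖ * ‖vf (x, y, z.1)‖)) * (C * (1 + (z.2 : ℝ) ^ 2)⁻¹)) := by
    simpa only [add_mul] using h1'.add h2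
  have hFnorm : Summable (fun z : ℤ × ℤ => ‖F z‖) := by
    refine hH.of_nonneg_of_le (fun z => norm_nonneg _) ?_
    rintro ⟨p, q⟩
    have hd : ‖Φ (x - hbar * ((q : ℝ) - 2 * (p : ℝ)) * a)
        (y - hbar * ((q : ℝ) - 2 * (p : ℝ)) * b) (-q)‖ ≤ C * (1 + (q : ℝ) ^ 2)⁻¹ := by
      have := hdec (x - hbar * ((q : ℝ) - 2 * (p : ℝ)) * a)
        (y - hbar * ((q : ℝ) - 2 * (p : ℝ)) * b) (-q)
      rwa [show ((-q : ℤ) : ℝ) ^ 2 = (q : ℝ) ^ 2 by push_cast; ring] at this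
    have huv : ‖uf (x, y, p - q)‖ * ‖vf (x, y, p)‖ ≤
        (‖uf (x, y, p - q)‖ * ‖uf (x, y, p - q)‖) + (‖vf (x, y, p)‖ * ‖vf (x, y, p)‖) := by
      nlinarith [sq_nonneg (‖uf (x, y, p - q)‖ - ‖vf (x, y, p)‖),
        mul_nonneg (norm_nonneg (uf (x, y, p - q))) (norm_nonneg (vf (x, y, p)))]
    calc ‖F (p, q)‖
        = ‖Φ (x - hbar * ((q : ℝ) - 2 * (p : ℝ)) * a)
            (y - hbar * ((q : ℝ) - 2 * (p : ℝ)) * b) (-q)‖ *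
            (‖uf (x, y, p - q)‖ * ‖vf (x, y, p)‖) := by
          simp [hF, norm_mul, RCLike.norm_conj]
      _ ≤ (C * (1 + (q : ℝ) ^ 2)⁻¹) *
            ((‖uf (x, y, p - q)‖ * ‖uf (x, y, p - q)‖)
              + (‖vf (x, y, p)‖ * ‖vf (x, y, p)‖)) := by
          apply mul_le_mul hd huv (by positivity) (by positivity)
      _ = _ := by ring
  have hFsum : Summable F := hFnorm.of_norm
  have hGnorm : Summable (fun z : ℤ × ℤ => ‖G z‖) := by
    refine e.summable_iff.mp ?_
    refine hFnorm.congr fun z => ?_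
    simp only [Function.comp]
    rw [hGF z]
  have hGsum : Summable G := hGnorm.of_norm
  have hFrows : ∀ p : ℤ, Summable fun q => ‖F (p, q)‖ := fun p => hFnorm.prod_factor p
  have hGrows : ∀ p : ℤ, Summable fun q => ‖G (p, q)‖ := fun p => hGnorm.prod_factor p
  have hFrowsum : Summable fun p : ℤ => ∑' q, ‖F (p, q)‖ :=
    ((summable_prod_of_nonneg (fun z => norm_nonneg _)).mp hFnorm).2
  have hGrowsum : Summable fun p : ℤ => ∑' q, ‖G (p, q)‖ :=
    ((summable_prod_of_nonneg (fun z => norm_nonneg _)).mp hGnorm).2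
  have hAeq : ∀ p : ℤ, Afun hbar a b Φ uf vf (x, y, p) = ∑' q, F (p, q) := fun p => rfl
  have hBeq : ∀ p : ℤ, Bfun hbar a b Φ uf vf (x, y, p) = ∑' q, G (p, q) := fun p => rfl
  calc ∫ p : ℤ, Afun hbar a b Φ uf vf (x, y, p) ∂(Measure.count : Measure ℤ)
      = ∫ p : ℤ, (∑' q, F (p, q)) ∂(Measure.count : Measure ℤ) := by
        simp only [hAeq]
    _ = ∑' p : ℤ, ∑' q, F (p, q) := by
        apply my_integral_count
        refine hFrowsum.of_nonneg_of_le (fun p => norm_nonneg _) ?_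
        exact fun p => norm_tsum_le_tsum_norm (hFrows p)
    _ = ∑' z : ℤ × ℤ, F z := (Summable.tsum_prod' hFsum (fun p => hFsum.prod_factor p)).symm
    _ = ∑' z : ℤ × ℤ, G (e z) := tsum_congr fun z => (hGF z).symm
    _ = ∑' z : ℤ × ℤ, G z := e.tsum_eq G
    _ = ∑' p : ℤ, ∑' q, G (p, q) := Summable.tsum_prod' hGsum (fun p => hGsum.prod_factor p)
    _ = ∫ p : ℤ, (∑' q, G (p, q)) ∂(Measure.count : Measure ℤ) := by
        refine (my_integral_count ?_).symm
        refine hGrowsum.of_nonneg_of_le (fun p => norm_nonneg _) ?_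
        exact fun p => norm_tsum_le_tsum_norm (hGrows p)
    _ = _ := by simp only [hBeq]

end CoreRepStar

set_option maxHeartbeats 1000000 in
/-- `π` is `*`-preserving: `π(Φ*)` is the Hilbert-space adjoint of `π(Φ)`. -/
theorem rep_star (c : ℕ) (hc : 0 < c) (hbar μ ν : ℝ)
    (hμν : μ ^ 2 + ν ^ 2 ≠ 0) (Φ : ℝ → ℝ → ℤ → ℂ) (hΦ : IsSc c Φ)
    (T S : Lp ℂ 2 μQHM →L[ℂ] Lp ℂ 2 μQHM)
    (hT : RepOf hbar μ ν Φ T) (hS : RepOf hbar μ ν (invol Φ) S) :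
    S = ContinuousLinearMap.adjoint T := by
  classical
  obtain ⟨C, hdec⟩ := decay hΦ
  rw [ContinuousLinearMap.eq_adjoint_iff]
  intro ξ η
  have hμm : μQHM = (volume : Measure ℝ).prod
      (((volume : Measure ℝ).restrict (Set.Ico (0:ℝ) 1)).prod Measure.count) := rfl
  rw [MeasureTheory.L2.inner_def, MeasureTheory.L2.inner_def]
  simp only [RCLike.inner_apply]
  have hA : (fun w : ℝ × ℝ × ℤ =>
        (starRingEnd ℂ) ((S ξ : ℝ × ℝ × ℤ → ℂ) w) * (η : ℝ × ℝ × ℤ → ℂ) w)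
      =ᵐ[μQHM] Afun hbar μ ν Φ (ξ : ℝ × ℝ × ℤ → ℂ) (η : ℝ × ℝ × ℤ → ℂ) := by
    filter_upwards [hS ξ] with w hw
    simp only [Afun]
    rw [hw, Complex.conj_tsum, ← tsum_mul_right]
    refine tsum_congr fun q => ?_
    simp only [invol, map_mul, Complex.conj_conj]
    ring
  have hB : (fun w : ℝ × ℝ × ℤ =>
        (starRingEnd ℂ) ((ξ : ℝ × ℝ × ℤ → ℂ) w) * (T η : ℝ × ℝ × ℤ → ℂ) w)
      =ᵐ[μQHM] Bfun hbar μ ν Φ (ξ : ℝ × ℝ × ℤ → ℂ) (η : ℝ × ℝ × ℤ → ℂ) := by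
    filter_upwards [hT η] with w hw
    simp only [Bfun]
    rw [hw, ← tsum_mul_left]
  have hAint : Integrable (Afun hbar μ ν Φ (ξ : ℝ × ℝ × ℤ → ℂ) (η : ℝ × ℝ × ℤ → ℂ)) μQHM := by
    have h0 : Integrable (fun w : ℝ × ℝ × ℤ =>
        (starRingEnd ℂ) ((S ξ : ℝ × ℝ × ℤ → ℂ) w) * (η : ℝ × ℝ × ℤ → ℂ) w) μQHM := by
      simpa only [RCLike.inner_apply, mul_comm] using MeasureTheory.L2.integrable_inner (𝕜 := ℂ) (S ξ) η
    exact h0.congr hA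
  have hBint : Integrable (Bfun hbar μ ν Φ (ξ : ℝ × ℝ × ℤ → ℂ) (η : ℝ × ℝ × ℤ → ℂ)) μQHM := by
    have h0 : Integrable (fun w : ℝ × ℝ × ℤ =>
        (starRingEnd ℂ) ((ξ : ℝ × ℝ × ℤ → ℂ) w) * (T η : ℝ × ℝ × ℤ → ℂ) w) μQHM := by
      simpa only [RCLike.inner_apply, mul_comm] using MeasureTheory.L2.integrable_inner (𝕜 := ℂ) ξ (T η)
    exact h0.congr hB
  -- a.e. square-summability of the fibers
  have hfiber : ∀ ζ : Lp ℂ 2 μQHM, ∀ᵐ x ∂(volume : Measure ℝ),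
      ∀ᵐ y ∂((volume : Measure ℝ).restrict (Set.Ico (0:ℝ) 1)),
      Summable (fun p : ℤ => ‖(ζ : ℝ × ℝ × ℤ → ℂ) (x, y, p)‖ *
        ‖(ζ : ℝ × ℝ × ℤ → ℂ) (x, y, p)‖) := by
    intro ζ
    have h0 := MeasureTheory.L2.integrable_inner (𝕜 := ℂ) ζ ζ
    have hint2 : Integrable (fun w : ℝ × ℝ × ℤ =>
        ‖(ζ : ℝ × ℝ × ℤ → ℂ) w‖ * ‖(ζ : ℝ × ℝ × ℤ → ℂ) w‖)
        ((volume : Measure ℝ).prod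
          (((volume : Measure ℝ).restrict (Set.Ico (0:ℝ) 1)).prod Measure.count)) := by
      rw [← hμm]
      refine h0.norm.congr (Filter.Eventually.of_forall fun w => ?_)
      simp [RCLike.inner_apply, norm_mul, RCLike.norm_conj, pow_two]
    filter_upwards [hint2.prod_right_ae] with x hx
    filter_upwards [hx.prod_right_ae] with y hy
    have hsum := integrable_count_iff.mp hy
    simpa only [norm_mul, norm_norm] using hsum
  simp only [mul_comm ((η : ℝ × ℝ × ℤ → ℂ) _), mul_comm ((T η : ℝ × ℝ × ℤ → ℂ) _)]
  rw [integral_congr_ae hA, integral_congr_ae hB]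
  have hAint' : Integrable (Afun hbar μ ν Φ (ξ : ℝ × ℝ × ℤ → ℂ) (η : ℝ × ℝ × ℤ → ℂ))
      ((volume : Measure ℝ).prod
        (((volume : Measure ℝ).restrict (Set.Ico (0:ℝ) 1)).prod Measure.count)) := hAint
  have hBint' : Integrable (Bfun hbar μ ν Φ (ξ : ℝ × ℝ × ℤ → ℂ) (η : ℝ × ℝ × ℤ → ℂ))
      ((volume : Measure ℝ).prod
        (((volume : Measure ℝ).restrict (Set.Ico (0:ℝ) 1)).prod Measure.count)) := hBint
  show ∫ w, Afun hbar μ ν Φ (ξ : ℝ × ℝ × ℤ → ℂ) (η : ℝ × ℝ × ℤ → ℂ) w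
      ∂((volume : Measure ℝ).prod
        (((volume : Measure ℝ).restrict (Set.Ico (0:ℝ) 1)).prod Measure.count))
    = ∫ w, Bfun hbar μ ν Φ (ξ : ℝ × ℝ × ℤ → ℂ) (η : ℝ × ℝ × ℤ → ℂ) w
      ∂((volume : Measure ℝ).prod
        (((volume : Measure ℝ).restrict (Set.Ico (0:ℝ) 1)).prod Measure.count))
  rw [MeasureTheory.integral_prod _ hAint', MeasureTheory.integral_prod _ hBint']
  refine integral_congr_ae ?_
  filter_upwards [hAint'.prod_right_ae, hBint'.prod_right_ae, hfiber ξ, hfiber η]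
    with x hAx hBx hux hvx
  rw [MeasureTheory.integral_prod _ hAx, MeasureTheory.integral_prod _ hBx]
  refine integral_congr_ae ?_
  filter_upwards [hux, hvx] with y huy hvy
  exact core_rep_star hbar μ ν C Φ hdec _ _ x y huy hvy
end
end

section
/- The representation π is faithful: if Φ ∈ S^c and π(Φ) = 0 as an operator on L²(ℝ × 𝕋 × ℤ), then Φ = 0. -/
open MeasureTheory Complex

noncomputable section

open ENNReal

instance inst_s6 : SFinite (Measure.count : Measure ℤ) := by
  show SFinite (Measure.sum (fun a : ℤ => Measure.dirac a))
  exact sfinite_sum_of_countable _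

lemma count_map_sub (q : ℤ) :
    Measure.count.map (fun p : ℤ => p - q) = Measure.count := by
  have hm : Measurable fun p : ℤ => p - q := by fun_prop
  ext s hs
  rw [Measure.map_apply hm hs,
    Measure.count_apply (hs.preimage hm), Measure.count_apply hs]
  congr 1
  have hpre : (fun p : ℤ => p - q) ⁻¹' s = (fun p : ℤ => p + q) '' s := by
    ext x
    constructor
    · intro hx
      exact ⟨x - q, hx, by ring⟩
    · rintro ⟨y, hy, rfl⟩
      show y + q - q ∈ s
      simpa using hy
  rw [hpre, Set.InjOn.encard_image (add_left_injective q).injOn]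

lemma count_ae_all {Q : ℤ → Prop} (h : ∀ᵐ z ∂Measure.count, Q z) : ∀ z, Q z := by
  intro z
  by_contra hz
  have h0 : Measure.count {z' | ¬ Q z'} = 0 := ae_iff.mp h
  rw [Measure.count_eq_zero_iff] at h0
  exact absurd h0 (Set.nonempty_iff_ne_empty.mp ⟨z, hz⟩)

lemma zero_on_Ico_of_ae {g : ℝ → ℂ} (hg : Continuous g)
    (h : ∀ᵐ y ∂((volume : Measure ℝ).restrict (Set.Ico (0:ℝ) 1)), g y = 0) :
    ∀ y ∈ Set.Ico (0:ℝ) 1, g y = 0 := by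
  intro y hy
  by_contra hne
  have hU : IsOpen {t : ℝ | g t ≠ 0} :=
    (isClosed_eq hg continuous_const).isOpen_compl
  obtain ⟨ε, hε, hball⟩ := Metric.isOpen_iff.mp hU y hne
  have hsub : Set.Ioo y (min (y + ε) 1) ⊆ {t : ℝ | g t ≠ 0} ∩ Set.Ico 0 1 := by
    intro t ht
    refine ⟨hball ?_, ⟨le_of_lt (lt_of_le_of_lt hy.1 ht.1), lt_of_lt_of_le ht.2 (min_le_right _ _)⟩⟩
    rw [Metric.mem_ball, Real.dist_eq, abs_lt]
    constructor
    · linarith [ht.1]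
    · have := lt_of_lt_of_le ht.2 (min_le_left _ _); linarith
  have h0 : volume ({t : ℝ | g t ≠ 0} ∩ Set.Ico 0 1) = 0 := by
    have h1 : (volume : Measure ℝ).restrict (Set.Ico (0:ℝ) 1) {y' | ¬ g y' = 0} = 0 := ae_iff.mp h
    rwa [Measure.restrict_apply hU.measurableSet] at h1
  have hpos : 0 < volume (Set.Ioo y (min (y + ε) 1)) := by
    rw [Real.volume_Ioo]
    apply ENNReal.ofReal_pos.mpr
    have : y < min (y + ε) 1 := lt_min (by linarith) hy.2
    linarith
  exact absurd (measure_mono_null hsub h0) hpos.ne'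



/-- `π` is faithful: `π(Φ) = 0` implies `Φ = 0`. -/
theorem rep_faithful (c : ℕ) (hc : 0 < c) (hbar μ ν : ℝ)
    (hμν : μ ^ 2 + ν ^ 2 ≠ 0) (Φ : ℝ → ℝ → ℤ → ℂ) (hΦ : IsSc c Φ)
    (hT : RepOf hbar μ ν Φ 0) :
    ∀ (x y : ℝ) (p : ℤ), Φ x y p = 0 := by
  obtain ⟨hsm, hperi, hquasi, hbound⟩ := hΦ
  have hcont : ∀ p : ℤ, Continuous fun xy : ℝ × ℝ => Φ xy.1 xy.2 p :=
    fun p => (hsm p).continuous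
  set ρ : Measure ℝ := (volume : Measure ℝ).restrict (Set.Ico (0:ℝ) 1) with hρdef
  have hpres : ∀ q : ℤ, MeasurePreserving
      (fun w : ℝ × ℝ × ℤ => (w.1, w.2.1, w.2.2 - q)) μQHM μQHM := by
    intro q
    have h3 : MeasurePreserving (fun p : ℤ => p - q) Measure.count Measure.count :=
      ⟨by fun_prop, count_map_sub q⟩
    exact (MeasurePreserving.id (volume : Measure ℝ)).prod
      ((MeasurePreserving.id ρ).prod h3)
  have key : ∀ (n : ℕ) (p : ℤ), ∀ᵐ x ∂(volume : Measure ℝ), ∀ᵐ y ∂ρ,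
      x ∈ Set.Ioo (-(n:ℝ)) n →
        Φ (x + hbar * (p:ℝ) * μ) (y + hbar * (p:ℝ) * ν) p = 0 := by
    intro n p
    set A : Set (ℝ × ℝ × ℤ) :=
      Set.Ioo (-(n:ℝ)) n ×ˢ (Set.Ico (0:ℝ) 1 ×ˢ ({0} : Set ℤ)) with hAdef
    have hAm : MeasurableSet A :=
      measurableSet_Ioo.prod (measurableSet_Ico.prod (measurableSet_singleton 0))
    have hAfin : μQHM A ≠ ⊤ := by
      have h1 : μQHM A = volume (Set.Ioo (-(n:ℝ)) n) *
          (ρ (Set.Ico (0:ℝ) 1) * Measure.count ({0} : Set ℤ)) := by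
        rw [hAdef]
        show ((volume : Measure ℝ).prod (ρ.prod Measure.count)) _ = _
        rw [Measure.prod_prod, Measure.prod_prod]
      rw [h1, hρdef, Measure.restrict_apply measurableSet_Ico, Set.inter_self,
        Measure.count_singleton, Real.volume_Ioo, Real.volume_Ico]
      exact ENNReal.mul_ne_top ENNReal.ofReal_ne_top
        (ENNReal.mul_ne_top ENNReal.ofReal_ne_top (by simp))
    set ξ : Lp ℂ 2 μQHM := indicatorConstLp 2 hAm hAfin (1 : ℂ) with hξdef
    have h0 := hT ξ
    have hz : ((0 : Lp ℂ 2 μQHM →L[ℂ] Lp ℂ 2 μQHM) ξ : ℝ × ℝ × ℤ → ℂ)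
        =ᵐ[μQHM] 0 := by
      rw [ContinuousLinearMap.zero_apply]
      exact Lp.coeFn_zero ℂ 2 μQHM
    have hind : ∀ q : ℤ, ∀ᵐ w ∂μQHM,
        (ξ : ℝ × ℝ × ℤ → ℂ) (w.1, w.2.1, w.2.2 - q)
          = A.indicator (fun _ => (1:ℂ)) (w.1, w.2.1, w.2.2 - q) := by
      intro q
      exact (hpres q).quasiMeasurePreserving.ae_eq_comp
        (indicatorConstLp_coeFn (p := 2) (hs := hAm) (hμs := hAfin) (c := (1:ℂ)))
    have hall : ∀ᵐ w ∂μQHM, ∀ q : ℤ,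
        (ξ : ℝ × ℝ × ℤ → ℂ) (w.1, w.2.1, w.2.2 - q)
          = A.indicator (fun _ => (1:ℂ)) (w.1, w.2.1, w.2.2 - q) :=
      ae_all_iff.mpr hind
    have main : ∀ᵐ w ∂μQHM,
        (w.1 ∈ Set.Ioo (-(n:ℝ)) n ∧ w.2.1 ∈ Set.Ico (0:ℝ) 1) →
          Φ (w.1 + hbar * (w.2.2:ℝ) * μ) (w.2.1 + hbar * (w.2.2:ℝ) * ν) w.2.2 = 0 := by
      filter_upwards [h0, hz, hall] with w hw hwz hwind
      rintro ⟨hx, hy⟩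
      have hsum : (0:ℂ) = ∑' q : ℤ,
          Φ (w.1 - hbar * ((q : ℝ) - 2 * (w.2.2 : ℝ)) * μ)
              (w.2.1 - hbar * ((q : ℝ) - 2 * (w.2.2 : ℝ)) * ν) q *
            A.indicator (fun _ => (1:ℂ)) (w.1, w.2.1, w.2.2 - q) := by
        calc (0:ℂ) = ((0 : ℝ × ℝ × ℤ → ℂ) w) := rfl
        _ = ((0 : Lp ℂ 2 μQHM →L[ℂ] Lp ℂ 2 μQHM) ξ : ℝ × ℝ × ℤ → ℂ) w := hwz.symm
        _ = ∑' q : ℤ,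
            Φ (w.1 - hbar * ((q : ℝ) - 2 * (w.2.2 : ℝ)) * μ)
                (w.2.1 - hbar * ((q : ℝ) - 2 * (w.2.2 : ℝ)) * ν) q *
              (ξ : ℝ × ℝ × ℤ → ℂ) (w.1, w.2.1, w.2.2 - q) := hw
        _ = _ := tsum_congr fun q => by rw [hwind q]
      rw [tsum_eq_single w.2.2 (fun q hq => ?_)] at hsum
      · have hmem : (w.1, w.2.1, w.2.2 - w.2.2) ∈ A := by
          simp only [hAdef, Set.mem_prod, Set.mem_singleton_iff]
          exact ⟨hx, hy, sub_self _⟩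
        rw [Set.indicator_of_mem hmem, mul_one] at hsum
        have harg1 : w.1 - hbar * ((w.2.2 : ℝ) - 2 * (w.2.2 : ℝ)) * μ
            = w.1 + hbar * (w.2.2:ℝ) * μ := by ring
        have harg2 : w.2.1 - hbar * ((w.2.2 : ℝ) - 2 * (w.2.2 : ℝ)) * ν
            = w.2.1 + hbar * (w.2.2:ℝ) * ν := by ring
        rw [harg1, harg2] at hsum
        exact hsum.symm
      · have hnmem : (w.1, w.2.1, w.2.2 - q) ∉ A := by
          simp only [hAdef, Set.mem_prod, Set.mem_singleton_iff]
          rintro ⟨-, -, h⟩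
          exact hq (by omega)
        rw [Set.indicator_of_notMem hnmem, mul_zero]
    have main' : ∀ᵐ w ∂((volume : Measure ℝ).prod (ρ.prod (Measure.count : Measure ℤ))),
        (w.1 ∈ Set.Ioo (-(n:ℝ)) n ∧ w.2.1 ∈ Set.Ico (0:ℝ) 1) →
          Φ (w.1 + hbar * (w.2.2:ℝ) * μ) (w.2.1 + hbar * (w.2.2:ℝ) * ν) w.2.2 = 0 := main
    have h1 := Measure.ae_ae_of_ae_prod main'
    filter_upwards [h1] with x hx1
    have h2 := Measure.ae_ae_of_ae_prod hx1
    filter_upwards [h2, ae_restrict_mem measurableSet_Ico] with y hy1 hyI hxI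
    exact count_ae_all hy1 p ⟨hxI, hyI⟩
  intro x₀ y₀ p₀
  set a : ℝ := hbar * (p₀:ℝ) * μ with hadef
  set b : ℝ := hbar * (p₀:ℝ) * ν with hbdef
  have keyx : ∀ᵐ x ∂(volume : Measure ℝ), ∀ y : ℝ, Φ (x + a) y p₀ = 0 := by
    have hco := ae_all_iff.mpr (fun n : ℕ => key n p₀)
    filter_upwards [hco] with x hx
    obtain ⟨n, hn⟩ : ∃ n : ℕ, x ∈ Set.Ioo (-(n:ℝ)) n := by
      obtain ⟨n, hn⟩ := exists_nat_gt |x|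
      exact ⟨n, by constructor <;> [skip; skip] <;> cases abs_lt.mp hn <;> linarith [abs_lt.mp hn]⟩
    have hy : ∀ᵐ y ∂ρ, Φ (x + a) (y + b) p₀ = 0 := by
      filter_upwards [hx n] with y h using h hn
    have hgc : Continuous fun y : ℝ => Φ (x + a) (y + b) p₀ :=
      (hcont p₀).comp (Continuous.prodMk continuous_const (continuous_id.add continuous_const))
    have hIco : ∀ y ∈ Set.Ico (0:ℝ) 1, Φ (x + a) (y + b) p₀ = 0 :=
      zero_on_Ico_of_ae hgc hy
    have hper' : Function.Periodic (fun y : ℝ => Φ (x + a) (y + b) p₀) 1 := by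
      intro y
      have := hperi (x + a) (y + b) p₀
      simpa [add_right_comm] using this
    intro y
    have h2 : Φ (x + a) ((y - b - ⌊y - b⌋) + b) p₀ = Φ (x + a) ((y - b) + b) p₀ := by
      have := hper'.sub_int_mul_eq (x := y - b) ⌊(y - b : ℝ)⌋
      simpa using this
    have h3 : Φ (x + a) ((y - b) + b) p₀ = Φ (x + a) y p₀ := by norm_num
    rw [← h3, ← h2]
    refine hIco _ ?_
    rw [Int.self_sub_floor]
    exact ⟨Int.fract_nonneg _, Int.fract_lt_one _⟩
  have hfinal : ∀ x : ℝ, Φ (x + a) y₀ p₀ = 0 := by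
    intro x
    by_contra hxne
    have hZo : IsOpen {x' : ℝ | Φ (x' + a) y₀ p₀ ≠ 0} := by
      have : Continuous fun x' : ℝ => Φ (x' + a) y₀ p₀ :=
        (hcont p₀).comp (Continuous.prodMk (continuous_id.add continuous_const) continuous_const)
      exact (isClosed_eq this continuous_const).isOpen_compl
    have hnull : volume {x' : ℝ | Φ (x' + a) y₀ p₀ ≠ 0} = 0 := by
      refine measure_mono_null ?_ (ae_iff.mp keyx)
      intro x' hx' h
      exact hx' (h y₀)
    have := hZo.measure_pos volume ⟨x, hxne⟩
    exact absurd hnull this.ne'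
  have := hfinal (x₀ - a)
  simpa using this
end
end

section
/- The action L is ergodic at the smooth level: if Φ ∈ S^c satisfies L_{(r,s,t)}Φ = Φ for all (r,s,t) ∈ ℝ³, then there exists λ ∈ ℂ such that Φ(x,y,p) = λ when p = 0 and Φ(x,y,p) = 0 when p ≠ 0; i.e., Φ is a scalar multiple of the unit of S^c. -/
open MeasureTheory Complex

noncomputable section

/-- the action `L` is ergodic at the smooth level: an invariant element
of `S^c` is a scalar multiple of the unit. -/
theorem Lact_ergodic (c : ℕ) (hc : 0 < c) (hbar μ ν : ℝ)
    (hμν : μ ^ 2 + ν ^ 2 ≠ 0) (Φ : ℝ → ℝ → ℤ → ℂ) (hΦ : IsSc c Φ)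
    (hinv : ∀ g : ℝ × ℝ × ℝ, Lact c g Φ = Φ) :
    ∃ lam : ℂ, ∀ (x y : ℝ) (p : ℤ), Φ x y p = if p = 0 then lam else 0 := by
  refine ⟨Φ 0 0 0, fun x y p => ?_⟩
  by_cases hp : p = 0
  · subst hp
    simp only [if_pos]
    have h := congrFun (congrFun (congrFun (hinv (x, y, 0)) x) y) 0
    simp [Lact, expi] at h
    exact h.symm
  · simp only [if_neg hp]
    have h := congrFun (congrFun (congrFun (hinv (0, 0, 1/(2*(p:ℝ)))) x) y) p
    have hp' : (p : ℝ) ≠ 0 := Int.cast_ne_zero.mpr hp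
    simp only [Lact, sub_zero, Nat.cast_ofNat, mul_zero, zero_mul, add_zero] at h
    have he : expi ((p : ℝ) * (1/(2*(p:ℝ)))) = -1 := by
      have : (p : ℝ) * (1/(2*(p:ℝ))) = 1/2 := by
        field_simp
      rw [this]
      unfold expi
      rw [show (2 * Real.pi * Complex.I * ((1:ℝ)/2 : ℝ) : ℂ) = Real.pi * Complex.I by push_cast; ring]
      simpa using Complex.exp_pi_mul_I
    rw [he] at h
    linear_combination (h - Φ x y p) / (-2)
end
end
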